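/- arXiv:1705.05194 — 4 statements merged into one kernel-verified Lean document; each statement's English description precedes it below -/
import Mathlib

section
/- Fix d_*, k_* ∈ ℕ, r > 0 and R > 0, and set m_* = d_* k_*. For y ∈ ℝ^{d_*} let V(y) be a random vector in ℝ^{d_*} whose law has density x ↦ 𝔪_r^{−d_*} ∏_{k=1}^{d_*} ψ_r(|x_k − y_k|²) with respect to Lebesgue measure, and define Ṽ(y) ∈ ℝ^{m_*} by Ṽ(y)_l = V(y)_{j(l)}^{k(l)+1} − E(V(y)_{j(l)}^{k(l)+1}) for l ∈ {1,…,m_*}. Then there exists λ_R > 0 such that for every y ∈ ℝ^{d_*} with |y| ≤ R and every ξ ∈ ℝ^{m_*}: ⟨Cov(Ṽ(y)) ξ, ξ⟩ ≥ λ_R |ξ|². -/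
open MeasureTheory Real

noncomputable section

/-- `θ_r(t) = 1 − 1/(1 − (t/r − 1)²)`. -/
def thetaR (r t : ℝ) : ℝ := 1 - 1 / (1 - (t / r - 1) ^ 2)

/-- `ψ_r(t) = 1_{|t| ≤ r} + 1_{r < |t| ≤ 2r} e^{θ_r(|t|)}`. -/
def psiR (r t : ℝ) : ℝ :=
  if |t| ≤ r then 1 else if |t| ≤ 2 * r then Real.exp (thetaR r |t|) else 0

/-- `𝔪_r = ∫_ℝ ψ_r(z²) dz`. -/
def mR (r : ℝ) : ℝ := ∫ z : ℝ, psiR r (z ^ 2)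

/-- `k(l) = ⌊(l−1)/d_*⌋` (0-indexed). -/
def kfun (d : ℕ) (l : ℕ) : ℕ := l / d

/-- `j(l)` (0-indexed). -/
def jfun (d : ℕ) (hd : 0 < d) (l : ℕ) : Fin d := ⟨l % d, Nat.mod_lt _ hd⟩

/-- The law of `V(y)`: density `𝔪_r^{−d_*} ∏_k ψ_r(|x_k − y_k|²)` w.r.t. Lebesgue
measure on `ℝ^{d_*}`. -/
def muV (d : ℕ) (r : ℝ) (y : Fin d → ℝ) : Measure (Fin d → ℝ) :=
  (volume : Measure (Fin d → ℝ)).withDensity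
    (fun x => ENNReal.ofReal ((∏ k, psiR r (|x k - y k| ^ 2)) / (mR r) ^ d))

/-!
The law `muV d r y` is the translate by `y` of the fixed law `ν = muV d r 0`, so the quadratic
form at `y` is the variance under `ν` of `x ↦ ∑ ξ_l (x + y)_{j(l)}^{k(l)+1}`. Since `ν` is a finite
measure carried by a compact box, this variance is jointly continuous in `(y, ξ)`, and it is
homogeneous of degree two in `ξ`. It is positive for `ξ ≠ 0`: `ν` dominates a multiple of Lebesgue
measure on a smaller box, on which a nontrivial combination of the distinct monomials
`x_j^{k+1}` cannot be constant. A positive lower bound on the compact set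
`{|y| ≤ R} × {|ξ| = 1}` then scales to all `ξ`.
-/

open Metric Set

lemma psiR_nonneg (r t : ℝ) : 0 ≤ psiR r t := by
  unfold psiR
  split_ifs <;> positivity

lemma psiR_le_exp_one (r t : ℝ) : psiR r t ≤ exp 1 := by
  unfold psiR thetaR
  split_ifs with h₁ h₂
  · exact one_le_exp zero_le_one
  · have hr : 0 < r := by linarith [abs_nonneg t]
    have hu : (|t| / r - 1) ^ 2 ≤ 1 := by
      rw [sq_le_one_iff_abs_le_one, abs_le, le_sub_iff_add_le, sub_le_iff_le_add,
        le_div_iff₀ hr, div_le_iff₀ hr]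
      constructor <;> linarith
    gcongr
    linarith [one_div_nonneg.mpr (sub_nonneg.mpr hu)]
  · positivity

lemma psiR_of_abs_le {r t : ℝ} (h : |t| ≤ r) : psiR r t = 1 := if_pos h

lemma psiR_of_lt_abs {r t : ℝ} (h : 2 * r < |t|) : psiR r t = 0 := by
  unfold psiR
  rw [if_neg (by linarith [abs_nonneg t]), if_neg h.not_ge]

lemma measurable_psiR (r : ℝ) : Measurable (psiR r) := by
  unfold psiR thetaR
  exact Measurable.ite (measurableSet_le (by fun_prop) (by fun_prop)) measurable_const
    (Measurable.ite (measurableSet_le (by fun_prop) (by fun_prop)) (by fun_prop)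
      measurable_const)

lemma integrable_psiR_sq (r : ℝ) : Integrable fun z : ℝ => psiR r (z ^ 2) := by
  have hmeas : Measurable fun z : ℝ => psiR r (z ^ 2) := (measurable_psiR r).comp (by fun_prop)
  refine IntegrableOn.integrable_of_forall_notMem_eq_zero (s := closedBall 0 √(2 * r))
    (Measure.integrableOn_of_bounded (M := exp 1) measure_closedBall_lt_top.ne
      hmeas.aestronglyMeasurable (ae_of_all _ fun z => ?_)) fun z hz => ?_
  · rw [norm_of_nonneg (psiR_nonneg _ _)]
    exact psiR_le_exp_one _ _
  · rw [mem_closedBall, dist_zero_right, norm_eq_abs, not_le] at hz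
    rw [psiR_of_lt_abs (by rw [abs_of_nonneg (sq_nonneg z), ← sq_abs]; exact lt_sq_of_sqrt_lt hz)]

lemma mR_nonneg {r : ℝ} : 0 ≤ mR r := integral_nonneg fun _ => psiR_nonneg _ _

lemma mR_pos {r : ℝ} (hr : 0 < r) : 0 < mR r := by
  rw [mR, integral_pos_iff_support_of_nonneg (fun z => psiR_nonneg _ _) (integrable_psiR_sq r)]
  refine (measure_ball_pos volume 0 (sqrt_pos.mpr hr)).trans_le (measure_mono ?_)
  intro z hz
  rw [mem_ball, dist_zero_right, norm_eq_abs] at hz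
  rw [Function.mem_support, psiR_of_abs_le]
  · exact one_ne_zero
  · rw [abs_of_nonneg (sq_nonneg z), ← sq_abs]
    exact (lt_sqrt (abs_nonneg z)).mp hz |>.le

section Density

variable {d : ℕ} {r : ℝ}

lemma prod_psiR_eq_one (hr : 0 ≤ r) {x y : Fin d → ℝ} (hx : x ∈ closedBall y √r) :
    ∏ k, psiR r (|x k - y k| ^ 2) = 1 := by
  rw [mem_closedBall, dist_pi_le_iff (sqrt_nonneg r)] at hx
  refine Finset.prod_eq_one fun k _ => psiR_of_abs_le ?_
  rw [abs_of_nonneg (sq_nonneg _)]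
  exact (le_sqrt (abs_nonneg _) hr).mp (hx k)

lemma prod_psiR_eq_zero {x y : Fin d → ℝ} (hx : x ∉ closedBall y √(2 * r)) :
    ∏ k, psiR r (|x k - y k| ^ 2) = 0 := by
  rw [mem_closedBall, dist_pi_le_iff (sqrt_nonneg _)] at hx
  push Not at hx
  obtain ⟨k, hk⟩ := hx
  rw [Real.dist_eq] at hk
  refine Finset.prod_eq_zero (Finset.mem_univ k) (psiR_of_lt_abs ?_)
  rw [abs_of_nonneg (sq_nonneg _)]
  exact lt_sq_of_sqrt_lt hk

lemma prod_psiR_le (x y : Fin d → ℝ) : ∏ k, psiR r (|x k - y k| ^ 2) ≤ exp 1 ^ d := by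
  calc ∏ k, psiR r (|x k - y k| ^ 2) ≤ ∏ _k : Fin d, exp 1 :=
        Finset.prod_le_prod (fun k _ => psiR_nonneg _ _) fun k _ => psiR_le_exp_one _ _
    _ = exp 1 ^ d := by simp

lemma smul_volume_restrict_le_muV (hr : 0 ≤ r) (y : Fin d → ℝ) :
    ENNReal.ofReal (mR r ^ d)⁻¹ • volume.restrict (closedBall y √r) ≤ muV d r y := by
  rw [← withDensity_const, ← withDensity_indicator measurableSet_closedBall]
  refine withDensity_mono (ae_of_all _ fun x => ?_)
  by_cases hx : x ∈ closedBall y √r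
  · rw [indicator_of_mem hx]
    dsimp only
    rw [prod_psiR_eq_one hr hx, one_div]
  · simp [hx]

lemma muV_le_smul_volume_restrict (y : Fin d → ℝ) :
    muV d r y ≤
      ENNReal.ofReal (exp 1 ^ d / mR r ^ d) • volume.restrict (closedBall y √(2 * r)) := by
  rw [← withDensity_const, ← withDensity_indicator measurableSet_closedBall]
  refine withDensity_mono (ae_of_all _ fun x => ?_)
  by_cases hx : x ∈ closedBall y √(2 * r)
  · rw [indicator_of_mem hx]
    exact ENNReal.ofReal_le_ofReal
      (div_le_div_of_nonneg_right (prod_psiR_le x y) (pow_nonneg mR_nonneg d))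
  · rw [indicator_of_notMem hx]
    dsimp only
    rw [prod_psiR_eq_zero hx, zero_div, ENNReal.ofReal_zero]

instance isFiniteMeasure_muV (y : Fin d → ℝ) : IsFiniteMeasure (muV d r y) := by
  refine ⟨(muV_le_smul_volume_restrict y univ).trans_lt ?_⟩
  rw [Measure.smul_apply, Measure.restrict_apply MeasurableSet.univ, univ_inter, smul_eq_mul]
  exact ENNReal.mul_lt_top ENNReal.ofReal_lt_top measure_closedBall_lt_top

lemma ae_mem_closedBall_muV (y : Fin d → ℝ) :
    ∀ᵐ x ∂muV d r y, x ∈ closedBall y √(2 * r) :=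
  (Measure.absolutelyContinuous_of_le (muV_le_smul_volume_restrict y)).ae_le
    (Measure.ae_smul_measure (ae_restrict_mem measurableSet_closedBall) _)

lemma muV_pos_of_isOpen (hr : 0 < r) (y : Fin d → ℝ) {V : Set (Fin d → ℝ)} (hV : IsOpen V)
    (hne : V.Nonempty) (hVy : V ⊆ closedBall y √r) : 0 < muV d r y V := by
  refine lt_of_lt_of_le ?_ (smul_volume_restrict_le_muV hr.le y V)
  rw [Measure.smul_apply, Measure.restrict_eq_self _ hVy, smul_eq_mul]
  have := mR_pos hr
  exact ENNReal.mul_pos (ENNReal.ofReal_pos.mpr (by positivity)).ne'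
    (hV.measure_pos volume hne).ne'

lemma integral_muV_eq_integral_add (g : (Fin d → ℝ) → ℝ) (y : Fin d → ℝ) :
    ∫ x, g x ∂muV d r y = ∫ x, g (x + y) ∂muV d r 0 := by
  have hmeas (y' : Fin d → ℝ) :
      Measurable fun x : Fin d → ℝ => ((∏ k, psiR r (|x k - y' k| ^ 2)) / mR r ^ d).toNNReal :=
    (Finset.measurable_prod _ fun k _ => (measurable_psiR r).comp (by fun_prop)).div_const _
      |>.real_toNNReal
  simp only [muV, ENNReal.ofReal]
  rw [integral_withDensity_eq_integral_smul (hmeas y),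
    integral_withDensity_eq_integral_smul (hmeas 0), ← integral_add_right_eq_self _ y]
  simp

end Density

section CompactSupport

variable {E : Type*} [TopologicalSpace E] [MeasurableSpace E] [OpensMeasurableSpace E]
  {ν : Measure E} [IsFiniteMeasure ν] {K : Set E}

lemma Continuous.integrable_of_ae_mem_isCompact [T2Space E] (hK : IsCompact K)
    (hνK : ∀ᵐ x ∂ν, x ∈ K) {g : E → ℝ} (hg : Continuous g) : Integrable g ν := by
  rw [← Measure.restrict_eq_self_of_ae_mem hνK]
  exact hg.continuousOn.integrableOn_compact hK

lemma continuous_integral_of_ae_mem_isCompact {X : Type*} [TopologicalSpace X]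
    [FirstCountableTopology X] [LocallyCompactSpace X] (hK : IsCompact K)
    (hνK : ∀ᵐ x ∂ν, x ∈ K) {G : X → E → ℝ} (hG : Continuous (Function.uncurry G)) :
    Continuous fun p => ∫ x, G p x ∂ν := by
  rw [← Measure.restrict_eq_self_of_ae_mem hνK]
  exact continuous_parametric_integral_of_continuous hG hK

lemma integral_sq_sub_pos [T2Space E] (hK : IsCompact K) (hνK : ∀ᵐ x ∂ν, x ∈ K) {U : Set E}
    (hU : IsOpen U) (hνU : ∀ V, IsOpen V → V ⊆ U → V.Nonempty → 0 < ν V) {f : E → ℝ}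
    (hf : Continuous f) {c : ℝ} (hfc : ∃ x ∈ U, f x ≠ c) : 0 < ∫ x, (f x - c) ^ 2 ∂ν := by
  rw [integral_pos_iff_support_of_nonneg (f := fun x => (f x - c) ^ 2) (fun x => sq_nonneg _)
    (((hf.sub continuous_const).pow 2).integrable_of_ae_mem_isCompact hK hνK)]
  obtain ⟨x, hxU, hx⟩ := hfc
  refine (hνU _ (hU.inter (isOpen_ne_fun hf continuous_const)) inter_subset_left
    ⟨x, hxU, hx⟩).trans_le (measure_mono ?_)
  rintro z ⟨-, hz⟩
  simpa [sub_eq_zero] using hz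

end CompactSupport

theorem IsCompact.exists_pos_mul_norm_sq_le {Y F : Type*} [TopologicalSpace Y]
    [NormedAddCommGroup F] [NormedSpace ℝ F] [FiniteDimensional ℝ F] {A : Set Y}
    (hA : IsCompact A) {Q : Y → F → ℝ} (hQ : Continuous (Function.uncurry Q))
    (hsmul : ∀ y (c : ℝ) v, Q y (c • v) = c ^ 2 * Q y v)
    (hpos : ∀ y ∈ A, ∀ v ≠ 0, 0 < Q y v) :
    ∃ lam > 0, ∀ y ∈ A, ∀ v, lam * ‖v‖ ^ 2 ≤ Q y v := by
  obtain ⟨lam, hlam, hle⟩ := (hA.prod (isCompact_sphere (0 : F) 1)).exists_forall_le'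
    hQ.continuousOn (a := 0) fun p hp => hpos p.1 hp.1 p.2 (ne_zero_of_mem_unit_sphere ⟨p.2, hp.2⟩)
  refine ⟨lam, hlam, fun y hy v => ?_⟩
  rcases eq_or_ne v 0 with rfl | hv
  · simpa using (hsmul y 0 0).ge
  · have hnv : 0 < ‖v‖ := norm_pos_iff.mpr hv
    have hunit : ‖v‖⁻¹ • v ∈ sphere (0 : F) 1 := by simp [norm_smul, hnv.ne']
    calc lam * ‖v‖ ^ 2 ≤ ‖v‖ ^ 2 * Q y (‖v‖⁻¹ • v) := by
          rw [mul_comm]; gcongr; exact hle (y, _) ⟨hy, hunit⟩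
      _ = Q y v := by rw [← hsmul, smul_inv_smul₀ hnv.ne']

section ShiftedVariance

variable {E ι : Type*} [NormedAddCommGroup E] [MeasurableSpace E] [Fintype ι]

/-- For a probability measure `ν` this is `⟨Cov(φ(X + y)) ξ, ξ⟩` with `X ∼ ν`. -/
def shiftedVariance (ν : Measure E) (φ : ι → E → ℝ) (y : E) (ξ : ι → ℝ) : ℝ :=
  ∫ x, (∑ i, ξ i * (φ i (x + y) - ∫ x', φ i (x' + y) ∂ν)) ^ 2 ∂ν

lemma shiftedVariance_smul (ν : Measure E) (φ : ι → E → ℝ) (y : E) (c : ℝ) (ξ : ι → ℝ) :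
    shiftedVariance ν φ y (c • ξ) = c ^ 2 * shiftedVariance ν φ y ξ := by
  simp only [shiftedVariance, Pi.smul_apply, smul_eq_mul, mul_assoc, ← Finset.mul_sum, mul_pow,
    integral_const_mul]

variable [OpensMeasurableSpace E] {ν : Measure E} [IsFiniteMeasure ν] {K : Set E}
  {φ : ι → E → ℝ}

lemma continuous_shiftedVariance [ProperSpace E] (hK : IsCompact K) (hνK : ∀ᵐ x ∂ν, x ∈ K)
    (hφ : ∀ i, Continuous (φ i)) :
    Continuous fun p : E × (ι → ℝ) => shiftedVariance ν φ p.1 p.2 := by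
  have hmean (i : ι) : Continuous fun y => ∫ x', φ i (x' + y) ∂ν :=
    continuous_integral_of_ae_mem_isCompact hK hνK (G := fun y x => φ i (x + y))
      ((hφ i).comp (by fun_prop))
  refine continuous_integral_of_ae_mem_isCompact hK hνK (G := fun (p : E × (ι → ℝ)) x =>
    (∑ i, p.2 i * (φ i (x + p.1) - ∫ x', φ i (x' + p.1) ∂ν)) ^ 2) ?_
  change Continuous fun q : (E × (ι → ℝ)) × E =>
    (∑ i, q.1.2 i * (φ i (q.2 + q.1.1) - ∫ x', φ i (x' + q.1.1) ∂ν)) ^ 2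
  have hy : Continuous fun q : (E × (ι → ℝ)) × E => q.1.1 := by fun_prop
  exact (continuous_finsetSum _ fun i _ =>
    ((continuous_apply i).comp (continuous_snd.comp continuous_fst)).mul
      (((hφ i).comp (continuous_snd.add hy)).sub ((hmean i).comp hy))).pow 2

lemma shiftedVariance_pos (hK : IsCompact K) (hνK : ∀ᵐ x ∂ν, x ∈ K)
    (hφ : ∀ i, Continuous (φ i)) {U : Set E} (hU : IsOpen U)
    (hνU : ∀ V, IsOpen V → V ⊆ U → V.Nonempty → 0 < ν V) {y : E} {ξ : ι → ℝ}
    (hnc : ∀ c, ∃ x ∈ U, ∑ i, ξ i * φ i (x + y) ≠ c) : 0 < shiftedVariance ν φ y ξ := by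
  have hcentre : shiftedVariance ν φ y ξ =
      ∫ x, (∑ i, ξ i * φ i (x + y) - ∑ i, ξ i * ∫ x', φ i (x' + y) ∂ν) ^ 2 ∂ν := by
    simp only [shiftedVariance, mul_sub, Finset.sum_sub_distrib]
  rw [hcentre]
  exact integral_sq_sub_pos hK hνK hU hνU
    (continuous_finsetSum _ fun i _ => continuous_const.mul ((hφ i).comp (by fun_prop))) (hnc _)

theorem exists_pos_mul_sum_sq_le_shiftedVariance [ProperSpace E] (hK : IsCompact K)
    (hνK : ∀ᵐ x ∂ν, x ∈ K) (hφ : ∀ i, Continuous (φ i)) {U : Set E} (hU : IsOpen U)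
    (hνU : ∀ V, IsOpen V → V ⊆ U → V.Nonempty → 0 < ν V)
    (hnc : ∀ ξ : ι → ℝ, ξ ≠ 0 → ∀ y c, ∃ x ∈ U, ∑ i, ξ i * φ i (x + y) ≠ c)
    {A : Set E} (hA : IsCompact A) :
    ∃ lam > 0, ∀ y ∈ A, ∀ ξ, lam * ∑ i, ξ i ^ 2 ≤ shiftedVariance ν φ y ξ := by
  obtain ⟨lam, hlam, h⟩ := hA.exists_pos_mul_norm_sq_le (F := EuclideanSpace ℝ ι)
    (Q := fun y v => shiftedVariance ν φ y v)
    ((continuous_shiftedVariance hK hνK hφ).comp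
      (continuous_fst.prodMk ((PiLp.continuous_ofLp 2 _).comp continuous_snd)))
    (fun y c v => shiftedVariance_smul ν φ y c v)
    (fun y _ v hv => shiftedVariance_pos hK hνK hφ hU hνU (hnc v (by simpa using hv) y))
  refine ⟨lam, hlam, fun y hy ξ => ?_⟩
  simpa [EuclideanSpace.real_norm_sq_eq] using h y hy (WithLp.toLp 2 ξ)

end ShiftedVariance

open Polynomial in
lemma eq_zero_of_sum_mul_pow_succ_eq_const {ι : Type*} {s : Finset ι} {a : ι → ℝ} {e : ι → ℕ}
    (he : Set.InjOn e s) {T : Set ℝ} (hT : T.Infinite) {c : ℝ}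
    (h : ∀ t ∈ T, ∑ i ∈ s, a i * t ^ (e i + 1) = c) : ∀ i ∈ s, a i = 0 := by
  set q : ℝ[X] := ∑ i ∈ s, C (a i) * X ^ (e i + 1) - C c
  have hq : q = 0 := eq_zero_of_infinite_isRoot q <| hT.mono fun t ht => by
    simp [q, eval_finsetSum, h t ht]
  intro i hi
  have hcoeff : q.coeff (e i + 1) = a i := by
    rw [coeff_sub, coeff_C, if_neg (Nat.succ_ne_zero _), sub_zero, finsetSum_coeff,
      Finset.sum_eq_single_of_mem i hi]
    · rw [coeff_C_mul_X_pow, if_pos rfl]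
    · intro i' hi' hne
      rw [coeff_C_mul_X_pow, if_neg fun h => hne (he hi' hi (Nat.succ_injective h).symm)]
  rw [← hcoeff, hq, coeff_zero]

lemma eq_zero_of_sum_mul_pow_succ_eq_const_on_ball {ι : Type*} [Fintype ι] {n : ℕ}
    {j : ι → Fin n} {e : ι → ℕ} (hje : Function.Injective fun i => (j i, e i)) {ξ : ι → ℝ}
    {y : Fin n → ℝ} {δ : ℝ} (hδ : 0 < δ) {c : ℝ}
    (h : ∀ x ∈ ball y δ, ∑ i, ξ i * x (j i) ^ (e i + 1) = c) : ξ = 0 := by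
  classical
  funext i₀
  set J := j i₀
  have hline (t : ℝ) (ht : t ∈ ball (y J) δ) :
      ∑ i ∈ Finset.univ.filter (j · = J), ξ i * t ^ (e i + 1) =
        c - ∑ i ∈ Finset.univ.filter (j · ≠ J), ξ i * y (j i) ^ (e i + 1) := by
    have hx : Function.update y J t ∈ ball y δ := by
      rw [mem_ball, dist_pi_lt_iff hδ]
      intro k
      rcases eq_or_ne k J with rfl | hk
      · simpa using ht
      · simpa [hk] using hδ
    rw [eq_sub_iff_add_eq, ← h _ hx,
      ← Finset.sum_filter_add_sum_filter_not Finset.univ (fun i => j i = J)]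
    congr 1 <;> refine Finset.sum_congr rfl fun i hi => ?_ <;>
      simp only [Finset.mem_filter, Finset.mem_univ, true_and] at hi <;> simp [hi]
  refine eq_zero_of_sum_mul_pow_succ_eq_const (fun i hi i' hi' hii' => hje ?_)
    (by simpa [Real.ball_eq_Ioo] using Set.Ioo_infinite (by linarith : y J - δ < y J + δ))
    hline i₀ (by simp [J])
  simp only [Finset.coe_filter, Finset.mem_univ, true_and] at hi hi'
  change (j i, e i) = (j i', e i')
  rw [show j i = J from hi, show j i' = J from hi', hii']

lemma injective_jfun_kfun (d k : ℕ) (hd : 0 < d) :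
    Function.Injective fun l : Fin (d * k) => (jfun d hd l.val, kfun d l.val) := by
  intro l l' h
  simp only [Prod.mk.injEq, jfun, kfun, Fin.mk.injEq] at h
  exact Fin.ext (by rw [← Nat.div_add_mod l.val d, ← Nat.div_add_mod l'.val d, h.1, h.2])

lemma mem_closedBall_zero_of_sqrt_sum_sq_le {d : ℕ} {y : Fin d → ℝ} {R : ℝ}
    (hy : √(∑ k, y k ^ 2) ≤ R) : y ∈ closedBall 0 R := by
  rw [mem_closedBall_zero_iff, pi_norm_le_iff_of_nonneg ((sqrt_nonneg _).trans hy)]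
  exact fun k => (abs_le_sqrt (Finset.single_le_sum (fun i _ => sq_nonneg (y i))
    (Finset.mem_univ k))).trans hy

theorem uniform_nondegeneracy_of_powers_general
    (dst kst : ℕ) (hd : 0 < dst) (r R : ℝ) (hr : 0 < r) :
    ∃ lamR : ℝ, 0 < lamR ∧
      ∀ y : Fin dst → ℝ, Real.sqrt (∑ k, (y k) ^ 2) ≤ R →
        ∀ ξ : Fin (dst * kst) → ℝ,
          lamR * ∑ l, (ξ l) ^ 2 ≤
            ∫ x, (∑ l, ξ l *
                ((x (jfun dst hd l.val)) ^ (kfun dst l.val + 1) -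
                  ∫ x', (x' (jfun dst hd l.val)) ^ (kfun dst l.val + 1) ∂(muV dst r y)))
              ^ 2 ∂(muV dst r y) := by
  have hnc (ξ : Fin (dst * kst) → ℝ) (hξ : ξ ≠ 0) (y : Fin dst → ℝ) (c : ℝ) :
      ∃ x ∈ ball 0 √r, ∑ l, ξ l * (x + y) (jfun dst hd l.val) ^ (kfun dst l.val + 1) ≠ c := by
    by_contra! hconst
    refine hξ (eq_zero_of_sum_mul_pow_succ_eq_const_on_ball (injective_jfun_kfun dst kst hd)
      (sqrt_pos.mpr hr) (y := y) (c := c) fun x hx => ?_)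
    simpa using hconst (x - y) (by rwa [mem_ball_zero_iff, ← dist_eq_norm])
  obtain ⟨lam, hlam, h⟩ := exists_pos_mul_sum_sq_le_shiftedVariance (isCompact_closedBall _ _)
    (ae_mem_closedBall_muV 0)
    (φ := fun (l : Fin (dst * kst)) (x : Fin dst → ℝ) =>
      x (jfun dst hd l.val) ^ (kfun dst l.val + 1))
    (fun l => by fun_prop) isOpen_ball
    (fun V hV hVU hne => muV_pos_of_isOpen hr 0 hV hne (hVU.trans ball_subset_closedBall))
    hnc (isCompact_closedBall 0 R)
  refine ⟨lam, hlam, fun y hy ξ => ?_⟩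
  simp only [integral_muV_eq_integral_add (r := r) _ y]
  exact h y (mem_closedBall_zero_of_sqrt_sum_sq_le hy) ξ

theorem uniform_nondegeneracy_of_powers
    (dst kst : ℕ) (hd : 0 < dst) (r R : ℝ) (hr : 0 < r) (hR : 0 < R) :
    ∃ lamR : ℝ, 0 < lamR ∧
      ∀ y : Fin dst → ℝ, Real.sqrt (∑ k, (y k) ^ 2) ≤ R →
        ∀ ξ : Fin (dst * kst) → ℝ,
          lamR * ∑ l, (ξ l) ^ 2 ≤
            ∫ x, (∑ l, ξ l *
                ((x (jfun dst hd l.val)) ^ (kfun dst l.val + 1) -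
                  ∫ x', (x' (jfun dst hd l.val)) ^ (kfun dst l.val + 1) ∂(muV dst r y)))
              ^ 2 ∂(muV dst r y) :=
  uniform_nondegeneracy_of_powers_general dst kst hd r R hr

end
end

section
/- Let N ∈ ℕ, p ∈ (0,1), and let (χ_n)_{n∈ℕ} be independent Bernoulli random variables with P(χ_n = 1) = p. Let c be a finitely supported family of real numbers indexed by the strictly increasing tuples α = (α_1 < ⋯ < α_N) of positive integers, and set Ψ_N(c²) = Σ_{|α|=N} c(α)² χ^α. If 0 < x < (p/2)^N |c|_N², then P( Ψ_N(c²) ≤ x ) ≤ (2e³/9) · N · exp( − x² / (δ_N(c)² |c|_N²) ). -/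
/-!
Write `Ψ = ∑ₙ χₙ Yₙ`, where `Yₙ` collects the terms of the chaos whose smallest index is `n`,
with the factor `χₙ` removed. Since the indices increase, `Yₙ` depends only on the `χⱼ` with
`j > n`, and `Z = ∑ₙ Yₙ` is again a chaos, of order `N - 1`, whose coefficients are the `c(α)²`
summed over the fibres of `α ↦ (α₂, …, α_N)`: it has the same total mass `|c|²` and no larger row
sums. If `Ψ ≤ x`, then either `Z ≤ 2x/p`, which is handled by induction on `N`, or `Ψ ≤ x ≤ pZ/2`.
For the second event, Hoeffding's lemma for the Bernoulli factors shows that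
`exp (∑ₙ (a - λ χₙ) Yₙ)` has expectation at most `1`, and Markov's inequality with `λ = 2p/δ²`
bounds its probability by `exp (-px/δ²) ≤ exp (-x²/(δ²|c|²))`.
Each of the `N` steps thus costs `exp (-x²/(δ²|c|²))`, so the bound even holds with `1` in place
of `2e³/9`.
-/

open MeasureTheory ProbabilityTheory Real

lemma one_sub_add_mul_exp_le {p : ℝ} (hp0 : 0 ≤ p) (hp1 : p ≤ 1) (t : ℝ) :
    1 - p + p * exp t ≤ exp (p * t + t ^ 2 / 8) := by
  have hoeffding := (hasSubgaussianMGF_of_mem_Icc (μ := Ber(true, false, ⟨p, hp0, hp1⟩))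
    (X := fun b => if b then 1 else 0) (a := 0) (b := 1) (by fun_prop)
    (ae_of_all _ fun b => by cases b <;> simp)).mgf_le t
  norm_num [mgf, integral_bernoulliMeasure] at hoeffding
  have h1 : exp (p * t) * exp (t * (1 - p)) = exp t := by rw [← exp_add]; ring_nf
  have h2 : exp (p * t) * exp (-(t * p)) = 1 := by rw [← exp_add]; ring_nf; exact exp_zero
  calc 1 - p + p * exp t
      = exp (p * t) * (p * exp (t * (1 - p)) + (1 - p) * exp (-(t * p))) := by
        linear_combination (-p) * h1 - (1 - p) * h2
    _ ≤ exp (p * t) * exp (t ^ 2 / 8) := by gcongr; exact hoeffding.trans_eq (by ring_nf)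
    _ = exp (p * t + t ^ 2 / 8) := (exp_add _ _).symm

lemma one_sub_mul_exp_add_mul_exp_le_one {p l D y : ℝ} (hp0 : 0 ≤ p) (hp1 : p ≤ 1)
    (hy0 : 0 ≤ y) (hyD : y ≤ D) :
    (1 - p) * exp ((l * p - l ^ 2 * D / 8) * y) + p * exp ((l * p - l ^ 2 * D / 8 - l) * y)
      ≤ 1 := by
  set a := l * p - l ^ 2 * D / 8
  have hsplit : exp ((a - l) * y) = exp (a * y) * exp (-(l * y)) := by
    rw [← exp_add]; ring_nf
  calc (1 - p) * exp (a * y) + p * exp ((a - l) * y)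
      = exp (a * y) * (1 - p + p * exp (-(l * y))) := by rw [hsplit]; ring
    _ ≤ exp (a * y) * exp (p * -(l * y) + (-(l * y)) ^ 2 / 8) := by
        gcongr; exact one_sub_add_mul_exp_le hp0 hp1 _
    _ = exp (l ^ 2 * y * (y - D) / 8) := by rw [← exp_add]; congr 1; ring
    _ ≤ 1 := exp_le_one_iff.2 <| div_nonpos_of_nonpos_of_nonneg
        (mul_nonpos_of_nonneg_of_nonpos (by positivity) (by linarith)) (by norm_num)

lemma one_le_two_mul_exp_three_div_nine : 1 ≤ 2 * exp 3 / 9 := by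
  have := quadratic_le_exp_of_nonneg (x := 3) (by norm_num)
  rw [le_div_iff₀ (by norm_num)]
  linarith

lemma lintegral_comp_bernoulli_of_indep {Ω : Type*} {𝓖 mΩ : MeasurableSpace Ω}
    {P : Measure Ω} [IsProbabilityMeasure P] {p : ℝ} {X : Ω → ℝ} (hX : Measurable X)
    (hvals : ∀ ω, X ω = 0 ∨ X ω = 1) (hXp : P {ω | X ω = 1} = ENNReal.ofReal p) (hp0 : 0 ≤ p)
    (h𝓖 : 𝓖 ≤ mΩ) (hind : Indep (MeasurableSpace.comap X inferInstance) 𝓖 P)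
    {H : ℝ → Ω → ENNReal} (hH0 : Measurable[𝓖] (H 0)) (hH1 : Measurable[𝓖] (H 1)) :
    ∫⁻ ω, H (X ω) ω ∂P
      = ENNReal.ofReal (1 - p) * ∫⁻ ω, H 0 ω ∂P + ENNReal.ofReal p * ∫⁻ ω, H 1 ω ∂P := by
  set s := {ω | X ω = 1}
  have hs : MeasurableSet[MeasurableSpace.comap X inferInstance] s :=
    ⟨{1}, measurableSet_singleton 1, rfl⟩
  have hsm : MeasurableSet s := hX.comap_le s hs
  have hsplit : ∀ ω, H (X ω) ω = sᶜ.indicator 1 ω * H 0 ω + s.indicator 1 ω * H 1 ω := by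
    intro ω; rcases hvals ω with h | h <;> simp [s, h]
  have hfactor : ∀ t, MeasurableSet[MeasurableSpace.comap X inferInstance] t →
      ∀ G : Ω → ENNReal, Measurable[𝓖] G →
        ∫⁻ ω, t.indicator 1 ω * G ω ∂P = P t * ∫⁻ ω, G ω ∂P := by
    intro t ht G hG
    have hti : Measurable[MeasurableSpace.comap X inferInstance]
        (t.indicator (1 : Ω → ENNReal)) :=
      measurable_const.indicator ht
    rw [lintegral_mul_eq_lintegral_mul_lintegral_of_independent_measurableSpace hX.comap_le h𝓖
      hind hti hG, lintegral_indicator_one (hX.comap_le t ht)]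
  simp_rw [hsplit]
  rw [lintegral_add_left (f := fun ω => sᶜ.indicator 1 ω * H 0 ω)
      ((measurable_const.indicator hsm.compl).mul (hH0.mono h𝓖 le_rfl)),
    hfactor _ hs.compl _ hH0, hfactor _ hs _ hH1, prob_compl_eq_one_sub hsm, hXp,
    ENNReal.ofReal_sub _ hp0, ENNReal.ofReal_one]

lemma Finsupp.sum_mapDomain_eq_sum {α β M : Type*} [AddCommMonoid M] (f : α → β)
    (w : α →₀ M) : (w.mapDomain f).sum (fun _ r => r) = w.sum fun _ r => r :=
  Finsupp.sum_mapDomain_index (fun _ => rfl) (fun _ _ _ => rfl)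

lemma Finsupp.sum_eq_tsum {ι M : Type*} [AddCommMonoid M] [TopologicalSpace M] (w : ι →₀ M) :
    (w.sum fun _ r => r) = ∑' i, w i :=
  (tsum_eq_sum fun _ hi => Finsupp.notMem_support_iff.1 hi).symm

section Chaos

variable {Ω : Type*} {N : ℕ}

abbrev sigmaAbove (χ : ℕ → Ω → ℝ) (n : ℕ) : MeasurableSpace Ω :=
  ⨆ j ∈ Set.Ioi n, MeasurableSpace.comap (χ j) inferInstance

lemma sigmaAbove_anti {χ : ℕ → Ω → ℝ} {m n : ℕ} (h : m ≤ n) :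
    sigmaAbove χ n ≤ sigmaAbove χ m :=
  biSup_mono fun _ hj => lt_of_le_of_lt h hj

lemma measurable_sigmaAbove {χ : ℕ → Ω → ℝ} {n j : ℕ} (h : n < j) :
    Measurable[sigmaAbove χ n] (χ j) :=
  (comap_measurable (χ j)).mono (le_iSup₂ (f := fun j (_ : j ∈ Set.Ioi n) =>
    MeasurableSpace.comap (χ j) inferInstance) j h) le_rfl

/- With `w = c²`, `chaos w χ` is `Ψ_N(c²)` and `⨆ n, rowSum w n` is `δ_N(c)²`. -/

def chaos (w : (Fin N → ℕ) →₀ ℝ) (χ : ℕ → Ω → ℝ) (ω : Ω) : ℝ :=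
  w.sum fun α r => r * ∏ i, χ (α i) ω

def rowSum (w : (Fin N → ℕ) →₀ ℝ) (n : ℕ) : ℝ :=
  w.sum fun α r => if ∃ i, α i = n then r else 0

def headSlice (w : (Fin (N + 1) → ℕ) →₀ ℝ) (χ : ℕ → Ω → ℝ) (n : ℕ) (ω : Ω) : ℝ :=
  w.sum fun α r => if α 0 = n then r * ∏ i : Fin N, χ (α i.succ) ω else 0

lemma chaos_eq_sum_mul_headSlice (w : (Fin (N + 1) → ℕ) →₀ ℝ) (χ : ℕ → Ω → ℝ) (ω : Ω) :
    chaos w χ ω = ∑ n ∈ w.support.image (· 0), χ n ω * headSlice w χ n ω := by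
  simp only [chaos, headSlice, Finsupp.sum, Finset.mul_sum, mul_ite, mul_zero]
  rw [Finset.sum_comm]
  refine Finset.sum_congr rfl fun α hα => ?_
  rw [Finset.sum_ite_eq, if_pos (Finset.mem_image_of_mem _ hα), Fin.prod_univ_succ]
  ring

lemma chaos_mapDomain_tail (w : (Fin (N + 1) → ℕ) →₀ ℝ) (χ : ℕ → Ω → ℝ) (ω : Ω) :
    chaos (w.mapDomain Fin.tail) χ ω = ∑ n ∈ w.support.image (· 0), headSlice w χ n ω := by
  rw [chaos, Finsupp.sum_mapDomain_index (fun _ => zero_mul _) (fun _ _ _ => add_mul _ _ _)]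
  simp only [headSlice, Finsupp.sum]
  rw [Finset.sum_comm]
  refine Finset.sum_congr rfl fun α hα => ?_
  rw [Finset.sum_ite_eq, if_pos (Finset.mem_image_of_mem _ hα)]
  rfl

lemma chaos_eq_tsum (w : (Fin N → ℕ) →₀ ℝ) (χ : ℕ → Ω → ℝ) (ω : Ω) :
    chaos w χ ω = ∑' α, w α * ∏ i, χ (α i) ω :=
  (tsum_eq_sum fun α hα => by simp [Finsupp.notMem_support_iff.1 hα]).symm

lemma rowSum_eq_tsum (w : (Fin N → ℕ) →₀ ℝ) (n : ℕ) :
    rowSum w n = ∑' α : {a : Fin N → ℕ // ∃ i, a i = n}, w α := by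
  change _ = ∑' α : {a : Fin N → ℕ | ∃ i, a i = n}, w α
  rw [tsum_subtype, tsum_eq_sum (s := w.support) fun α hα => ?_]
  · exact Finset.sum_congr rfl fun α _ => by simp [Set.indicator_apply]
  · simp [Finsupp.notMem_support_iff.1 hα]

lemma le_rowSum {w : (Fin N → ℕ) →₀ ℝ} (hw : 0 ≤ w) {α : Fin N → ℕ} (hα : α ∈ w.support)
    (i : Fin N) : w α ≤ rowSum w (α i) := by
  have := Finset.single_le_sum (f := fun β => if ∃ j, β j = α i then w β else 0)
    (fun β _ => by split_ifs; exacts [hw β, le_rfl]) hα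
  simpa [rowSum, Finsupp.sum] using this

lemma rowSum_le_sum {w : (Fin N → ℕ) →₀ ℝ} (hw : 0 ≤ w) (n : ℕ) :
    rowSum w n ≤ w.sum fun _ r => r :=
  Finset.sum_le_sum fun α _ => by dsimp only; split_ifs; exacts [le_rfl, hw α]

lemma pos_of_rowSum_le {w : (Fin (N + 1) → ℕ) →₀ ℝ} (hw : 0 ≤ w)
    (hS : 0 < w.sum fun _ r => r) {D : ℝ} (hrow : ∀ n, rowSum w n ≤ D) : 0 < D := by
  obtain ⟨α, hα, hα0⟩ : ∃ α ∈ w.support, 0 < w α :=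
    Finset.exists_lt_of_sum_lt (f := 0) (g := w)
      (by simp only [Pi.zero_apply, Finset.sum_const_zero]; exact hS)
  exact hα0.trans_le ((le_rowSum hw hα 0).trans (hrow _))

lemma rowSum_mapDomain_tail_le {w : (Fin (N + 1) → ℕ) →₀ ℝ} (hw : 0 ≤ w) (n : ℕ) :
    rowSum (w.mapDomain Fin.tail) n ≤ rowSum w n := by
  rw [rowSum, Finsupp.sum_mapDomain_index (fun _ => by simp)
    (fun _ _ _ => by split_ifs <;> simp)]
  refine Finset.sum_le_sum fun α _ => ?_
  dsimp only
  split_ifs with h1 h2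
  · rfl
  · obtain ⟨i, hi⟩ := h1; exact absurd ⟨i.succ, hi⟩ h2
  · exact hw α
  · rfl

lemma strictMono_of_mem_support_mapDomain_tail {w : (Fin (N + 1) → ℕ) →₀ ℝ}
    (hw : ∀ α ∈ w.support, StrictMono α) :
    ∀ β ∈ (w.mapDomain Fin.tail).support, StrictMono β := by
  intro β hβ
  obtain ⟨α, hα, rfl⟩ := Finset.mem_image.1 (Finsupp.mapDomain_support hβ)
  exact (hw α hα).comp Fin.strictMono_succ

lemma headSlice_mem_Icc {w : (Fin (N + 1) → ℕ) →₀ ℝ} (hw : 0 ≤ w) {χ : ℕ → Ω → ℝ}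
    (hχ : ∀ j ω, χ j ω ∈ Set.Icc 0 1) (n : ℕ) (ω : Ω) :
    headSlice w χ n ω ∈ Set.Icc 0 (rowSum w n) := by
  have hprod (α : Fin (N + 1) → ℕ) : ∏ i : Fin N, χ (α i.succ) ω ∈ Set.Icc 0 1 :=
    ⟨Finset.prod_nonneg fun i _ => (hχ _ ω).1,
      Finset.prod_le_one (fun i _ => (hχ _ ω).1) fun i _ => (hχ _ ω).2⟩
  refine ⟨Finset.sum_nonneg fun α _ => ?_, Finset.sum_le_sum fun α _ => ?_⟩ <;> dsimp only
  · split_ifs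
    · exact mul_nonneg (hw α) (hprod α).1
    · rfl
  · split_ifs with h1 h2
    · exact mul_le_of_le_one_right (hw α) (hprod α).2
    · exact absurd ⟨0, h1⟩ h2
    · exact hw α
    · rfl

lemma measurable_headSlice {w : (Fin (N + 1) → ℕ) →₀ ℝ} (hw : ∀ α ∈ w.support, StrictMono α)
    (χ : ℕ → Ω → ℝ) (n : ℕ) : Measurable[sigmaAbove χ n] (headSlice w χ n) := by
  refine Finset.measurable_sum _ fun α hα => ?_
  by_cases h : α 0 = n
  · simp only [h, if_true]
    refine measurable_const.mul (Finset.measurable_prod _ fun i _ => measurable_sigmaAbove ?_)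
    exact h ▸ hw α hα (Fin.succ_pos i)
  · simp only [h, if_false]
    exact measurable_const

end Chaos

section BernoulliSequence

variable {Ω : Type*} [MeasurableSpace Ω] {P : Measure Ω} {p : ℝ} {χ : ℕ → Ω → ℝ}

structure IsBernoulliSequence (χ : ℕ → Ω → ℝ) (p : ℝ) (P : Measure Ω) : Prop where
  measurable : ∀ n, Measurable (χ n)
  indep : iIndepFun χ P
  eq_zero_or_eq_one : ∀ n ω, χ n ω = 0 ∨ χ n ω = 1
  measure_eq_one : ∀ n, P {ω | χ n ω = 1} = ENNReal.ofReal p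

namespace IsBernoulliSequence

lemma mem_Icc (hχ : IsBernoulliSequence χ p P) (n : ℕ) (ω : Ω) : χ n ω ∈ Set.Icc 0 1 := by
  rcases hχ.eq_zero_or_eq_one n ω with h | h <;> simp [h]

lemma sigmaAbove_le (hχ : IsBernoulliSequence χ p P) (n : ℕ) :
    sigmaAbove χ n ≤ ‹MeasurableSpace Ω› :=
  iSup₂_le fun j _ => (hχ.measurable j).comap_le

lemma indep_sigmaAbove (hχ : IsBernoulliSequence χ p P) (n : ℕ) :
    Indep (MeasurableSpace.comap (χ n) inferInstance) (sigmaAbove χ n) P := by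
  have := indep_iSup_of_disjoint (fun j => (hχ.measurable j).comap_le)
    ((iIndepFun_iff_iIndep _ _ _).1 hχ.indep) (S := {n}) (T := Set.Ioi n) (by simp)
  rwa [iSup_singleton] at this

variable [IsProbabilityMeasure P]

/- Peel off the smallest index `n`: the rest of the exponent only involves the `χ j` with
`j > n`, which are independent of `χ n`, and averaging over `χ n` costs a factor at most `1`
by Hoeffding's lemma. -/
lemma lintegral_exp_sum_le_one (hχ : IsBernoulliSequence χ p P) (hp0 : 0 ≤ p) (hp1 : p ≤ 1)
    {Y : ℕ → Ω → ℝ} {D l : ℝ} (hY : ∀ n, Measurable[sigmaAbove χ n] (Y n))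
    (hY0 : ∀ n ω, 0 ≤ Y n ω) (hYD : ∀ n ω, Y n ω ≤ D) (T : Finset ℕ) :
    ∫⁻ ω, ENNReal.ofReal (exp (∑ n ∈ T, (l * p - l ^ 2 * D / 8 - l * χ n ω) * Y n ω)) ∂P
      ≤ 1 := by
  induction T using Finset.induction_on_min with
  | empty => simp
  | insert n T hlt ih =>
    set a := l * p - l ^ 2 * D / 8
    set R : Ω → ℝ := fun ω => ∑ m ∈ T, (a - l * χ m ω) * Y m ω
    have hR : Measurable[sigmaAbove χ n] R := Finset.measurable_sum _ fun m hm =>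
      (measurable_const.sub (measurable_const.mul (measurable_sigmaAbove (hlt m hm)))).mul
        ((hY m).mono (sigmaAbove_anti (hlt m hm).le) le_rfl)
    set H : ℝ → Ω → ENNReal := fun s ω => ENNReal.ofReal (exp ((a - l * s) * Y n ω + R ω))
    have hH : ∀ s, Measurable[sigmaAbove χ n] (H s) := fun s =>
      ((measurable_const.mul (hY n)).add hR).exp.ennreal_ofReal
    have hH' : ∀ s, Measurable (H s) := fun s => (hH s).mono (hχ.sigmaAbove_le n) le_rfl
    have hnT : n ∉ T := fun h => (hlt n h).false
    calc ∫⁻ ω, ENNReal.ofReal (exp (∑ m ∈ insert n T, (a - l * χ m ω) * Y m ω)) ∂P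
        = ∫⁻ ω, H (χ n ω) ω ∂P := by simp only [Finset.sum_insert hnT, H, R]
      _ = ENNReal.ofReal (1 - p) * ∫⁻ ω, H 0 ω ∂P + ENNReal.ofReal p * ∫⁻ ω, H 1 ω ∂P :=
        lintegral_comp_bernoulli_of_indep (hχ.measurable n) (hχ.eq_zero_or_eq_one n)
          (hχ.measure_eq_one n) hp0 (hχ.sigmaAbove_le n) (hχ.indep_sigmaAbove n) (hH 0) (hH 1)
      _ = ∫⁻ ω, ENNReal.ofReal (1 - p) * H 0 ω + ENNReal.ofReal p * H 1 ω ∂P := by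
        rw [lintegral_add_left ((hH' 0).const_mul _), lintegral_const_mul _ (hH' 0),
          lintegral_const_mul _ (hH' 1)]
      _ ≤ ∫⁻ ω, ENNReal.ofReal (exp (R ω)) ∂P := by
        refine lintegral_mono fun ω => ?_
        simp only [H]
        rw [← ENNReal.ofReal_mul (by linarith), ← ENNReal.ofReal_mul hp0,
          ← ENNReal.ofReal_add (by positivity) (by positivity)]
        refine ENNReal.ofReal_le_ofReal ?_
        have hfactor := one_sub_mul_exp_add_mul_exp_le_one (l := l) hp0 hp1 (hY0 n ω) (hYD n ω)
        calc (1 - p) * exp ((a - l * 0) * Y n ω + R ω) + p * exp ((a - l * 1) * Y n ω + R ω)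
            = ((1 - p) * exp (a * Y n ω) + p * exp ((a - l) * Y n ω)) * exp (R ω) := by
              simp only [exp_add]; ring_nf
          _ ≤ exp (R ω) := mul_le_of_le_one_left (exp_pos _).le hfactor
      _ ≤ 1 := ih

lemma measure_sum_mul_le_and_le_sum_le (hχ : IsBernoulliSequence χ p P) (hp0 : 0 < p)
    (hp1 : p ≤ 1) {Y : ℕ → Ω → ℝ} {D : ℝ} (hD : 0 < D)
    (hY : ∀ n, Measurable[sigmaAbove χ n] (Y n)) (hY0 : ∀ n ω, 0 ≤ Y n ω)
    (hYD : ∀ n ω, Y n ω ≤ D) (T : Finset ℕ) (x : ℝ) :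
    P {ω | ∑ n ∈ T, χ n ω * Y n ω ≤ x ∧ 2 * x / p ≤ ∑ n ∈ T, Y n ω}
      ≤ ENNReal.ofReal (exp (-(p * x / D))) := by
  set l := 2 * p / D
  set a := l * p - l ^ 2 * D / 8
  have ha : a = 3 * p ^ 2 / (2 * D) := by simp only [a, l]; field_simp; ring
  set G : Ω → ENNReal := fun ω => ENNReal.ofReal (exp (∑ n ∈ T, (a - l * χ n ω) * Y n ω))
  have hG : Measurable G := (Finset.measurable_sum _ fun n _ =>
    (measurable_const.sub (measurable_const.mul (hχ.measurable n))).mul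
      ((hY n).mono (hχ.sigmaAbove_le n) le_rfl)).exp.ennreal_ofReal
  set ε := ENNReal.ofReal (exp (p * x / D))
  have hsub : {ω | ∑ n ∈ T, χ n ω * Y n ω ≤ x ∧ 2 * x / p ≤ ∑ n ∈ T, Y n ω}
      ⊆ {ω | ε ≤ G ω} := by
    rintro ω ⟨hΨ, hZ⟩
    refine ENNReal.ofReal_le_ofReal (exp_le_exp.2 ?_)
    have hsum : ∑ n ∈ T, (a - l * χ n ω) * Y n ω
        = a * ∑ n ∈ T, Y n ω - l * ∑ n ∈ T, χ n ω * Y n ω := by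
      rw [Finset.mul_sum, Finset.mul_sum, ← Finset.sum_sub_distrib]
      exact Finset.sum_congr rfl fun n _ => by ring
    have hpx : p * x / D = a * (2 * x / p) - l * x := by
      rw [ha]; simp only [l]; field_simp; ring
    have ha0 : 0 ≤ a := by rw [ha]; positivity
    rw [hsum, hpx]
    gcongr
  have hmarkov := mul_meas_ge_le_lintegral₀ (μ := P) hG.aemeasurable ε
  calc P {ω | ∑ n ∈ T, χ n ω * Y n ω ≤ x ∧ 2 * x / p ≤ ∑ n ∈ T, Y n ω}
      ≤ P {ω | ε ≤ G ω} := measure_mono hsub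
    _ = ENNReal.ofReal (exp (-(p * x / D))) * (ε * P {ω | ε ≤ G ω}) := by
      rw [← mul_assoc, ← ENNReal.ofReal_mul (exp_pos _).le, ← exp_add, neg_add_cancel,
        exp_zero, ENNReal.ofReal_one, one_mul]
    _ ≤ ENNReal.ofReal (exp (-(p * x / D))) * 1 := by
      gcongr
      exact hmarkov.trans (hχ.lintegral_exp_sum_le_one hp0.le hp1 hY hY0 hYD T)
    _ = ENNReal.ofReal (exp (-(p * x / D))) := mul_one _

lemma measure_chaos_le_le_tail_add (hχ : IsBernoulliSequence χ p P) (hp0 : 0 < p)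
    (hp1 : p ≤ 1) {N : ℕ} {w : (Fin (N + 1) → ℕ) →₀ ℝ} (hw : 0 ≤ w)
    (hmono : ∀ α ∈ w.support, StrictMono α) {D : ℝ} (hD : 0 < D)
    (hrow : ∀ n, rowSum w n ≤ D) (x : ℝ) :
    P {ω | chaos w χ ω ≤ x}
      ≤ P {ω | chaos (w.mapDomain Fin.tail) χ ω ≤ 2 * x / p}
        + ENNReal.ofReal (exp (-(p * x / D))) := by
  set T := w.support.image (· 0)
  have hsub : {ω | chaos w χ ω ≤ x} ⊆ {ω | chaos (w.mapDomain Fin.tail) χ ω ≤ 2 * x / p} ∪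
      {ω | ∑ n ∈ T, χ n ω * headSlice w χ n ω ≤ x ∧
        2 * x / p ≤ ∑ n ∈ T, headSlice w χ n ω} := by
    intro ω (hω : chaos w χ ω ≤ x)
    rw [chaos_eq_sum_mul_headSlice] at hω
    rcases le_or_gt (chaos (w.mapDomain Fin.tail) χ ω) (2 * x / p) with h | h
    · exact Or.inl h
    · exact Or.inr ⟨hω, by rw [chaos_mapDomain_tail] at h; exact h.le⟩
  refine (measure_mono hsub).trans ((measure_union_le _ _).trans (add_le_add le_rfl ?_))
  exact hχ.measure_sum_mul_le_and_le_sum_le hp0 hp1 hD (measurable_headSlice hmono χ)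
    (fun n ω => (headSlice_mem_Icc hw hχ.mem_Icc n ω).1)
    (fun n ω => (headSlice_mem_Icc hw hχ.mem_Icc n ω).2.trans (hrow n)) T x

theorem measure_chaos_le (hχ : IsBernoulliSequence χ p P) (hp0 : 0 < p) (hp1 : p ≤ 1)
    {N : ℕ} {w : (Fin N → ℕ) →₀ ℝ} (hw : 0 ≤ w) (hmono : ∀ α ∈ w.support, StrictMono α)
    {D : ℝ} (hrow : ∀ n, rowSum w n ≤ D) {x : ℝ} (hx0 : 0 < x)
    (hx : x < (p / 2) ^ N * w.sum fun _ r => r) :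
    P {ω | chaos w χ ω ≤ x}
      ≤ ENNReal.ofReal (N * exp (-(x ^ 2 / (D * w.sum fun _ r => r)))) := by
  induction N generalizing x with
  | zero =>
    have hempty : {ω | chaos w χ ω ≤ x} = ∅ := by
      ext ω
      simp only [chaos, Finset.univ_eq_empty, Finset.prod_empty, mul_one] at hx ⊢
      simpa using hx
    simp [hempty]
  | succ N ih =>
    set S := w.sum fun _ r => r
    have hS : 0 < S := pos_of_mul_pos_right (hx0.trans hx) (by positivity)
    have hD : 0 < D := pos_of_rowSum_le hw hS hrow
    have hxS : x < p * S := hx.trans_le <| by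
      gcongr
      exact (pow_le_of_le_one (by positivity) (by linarith) N.succ_ne_zero).trans (by linarith)
    have hxy : x ≤ 2 * x / p := by rw [le_div_iff₀ hp0]; nlinarith
    have hyS : 2 * x / p < (p / 2) ^ N * S := by
      rw [div_lt_iff₀ hp0]
      rw [pow_succ] at hx
      nlinarith
    have htail := ih (Finsupp.mapDomain_nonneg hw)
      (strictMono_of_mem_support_mapDomain_tail hmono)
      (fun n => (rowSum_mapDomain_tail_le hw n).trans (hrow n)) (x := 2 * x / p)
      (by positivity) (by rwa [Finsupp.sum_mapDomain_eq_sum])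
    rw [Finsupp.sum_mapDomain_eq_sum] at htail
    have hexp : x ^ 2 / (D * S) ≤ p * x / D := by
      rw [div_le_div_iff₀ (by positivity) hD]
      nlinarith [mul_lt_mul_of_pos_left hxS (mul_pos hx0 hD)]
    calc P {ω | chaos w χ ω ≤ x}
        ≤ ENNReal.ofReal (N * exp (-((2 * x / p) ^ 2 / (D * S))))
            + ENNReal.ofReal (exp (-(p * x / D))) :=
          (hχ.measure_chaos_le_le_tail_add hp0 hp1 hw hmono hD hrow x).trans
            (add_le_add htail le_rfl)
      _ ≤ ENNReal.ofReal (N * exp (-(x ^ 2 / (D * S))))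
            + ENNReal.ofReal (exp (-(x ^ 2 / (D * S)))) :=
          add_le_add (ENNReal.ofReal_le_ofReal (by gcongr))
            (ENNReal.ofReal_le_ofReal (exp_le_exp.2 (neg_le_neg hexp)))
      _ = ENNReal.ofReal ((N + 1 : ℕ) * exp (-(x ^ 2 / (D * S)))) := by
          rw [← ENNReal.ofReal_add (by positivity) (by positivity)]
          push_cast
          ring_nf

end IsBernoulliSequence

end BernoulliSequence

theorem iterated_hoeffding
    (N : ℕ) (p : ℝ) (hp0 : 0 < p) (hp1 : p < 1)
    (Ω : Type) [MeasurableSpace Ω] (P : Measure Ω) [IsProbabilityMeasure P]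
    (χ : ℕ → Ω → ℝ)
    (hmeas : ∀ n, Measurable (χ n))
    (hindep : iIndepFun χ P)
    (hvals : ∀ n ω, χ n ω = 0 ∨ χ n ω = 1)
    (hbern : ∀ n, P {ω | χ n ω = 1} = ENNReal.ofReal p)
    (c : (Fin N → ℕ) → ℝ)
    (hsupp : (Function.support c).Finite)
    (hincr : ∀ α : Fin N → ℕ, ¬ (StrictMono α ∧ ∀ i, 1 ≤ α i) → c α = 0)
    (x : ℝ) (hx0 : 0 < x)
    (hx : x < (p / 2) ^ N * ∑' α : Fin N → ℕ, (c α) ^ 2) :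
    (P {ω | (∑' α : Fin N → ℕ, (c α) ^ 2 * ∏ i, χ (α i) ω) ≤ x}).toReal ≤
      (2 * Real.exp 3 / 9) * N *
        Real.exp (-(x ^ 2 /
          ((⨆ n : ℕ, ∑' α : {a : Fin N → ℕ // ∃ i, a i = n}, (c α) ^ 2) *
            ∑' α : Fin N → ℕ, (c α) ^ 2))) := by
  have hχ : IsBernoulliSequence χ p P := ⟨hmeas, hindep, hvals, hbern⟩
  let w := Finsupp.ofSupportFinite (fun α => c α ^ 2) (hsupp.subset fun α hα => by simpa using hα)
  have hw : 0 ≤ w := fun α => sq_nonneg (c α)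
  have hmono : ∀ α ∈ w.support, StrictMono α := fun α hα => by
    by_contra h
    exact Finsupp.mem_support_iff.1 hα
      (by simp [w, Finsupp.ofSupportFinite_coe, hincr α fun h' => h h'.1])
  have hrow : ∀ n, rowSum w n ≤ ⨆ n, ∑' α : {a : Fin N → ℕ // ∃ i, a i = n}, c α ^ 2 := by
    refine fun n => (rowSum_eq_tsum w n).trans_le (le_ciSup
      (f := fun n => ∑' α : {a : Fin N → ℕ // ∃ i, a i = n}, c α ^ 2)
      ⟨w.sum fun _ r => r, ?_⟩ n)
    rintro _ ⟨m, rfl⟩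
    exact (rowSum_eq_tsum w m).symm.trans_le (rowSum_le_sum hw m)
  have h := hχ.measure_chaos_le hp0 hp1.le hw hmono hrow hx0 (by rwa [w.sum_eq_tsum])
  simp only [w.sum_eq_tsum, chaos_eq_tsum, w, Finsupp.ofSupportFinite_coe] at h
  refine (ENNReal.toReal_le_of_le_ofReal (by positivity) h).trans ?_
  rw [mul_assoc]
  exact le_mul_of_one_le_left (by positivity) one_le_two_mul_exp_three_div_nine
end

section
/- There exists a constant C > 0 such that for every integer n ≥ 2: Σ_{1≤i,j≤n, i≠j} ( Σ_{1≤k≤n, k≠i, k≠j} 1/√(|i−k|·|j−k|) )² ≤ C n². (Equivalently: the squared fourth-cumulant quantity κ²(c_n) = (1/(4n² ln²n)) Σ_{i≠j} (Σ_{k≠i,j} (|i−k||j−k|)^{−1/2})² associated to the coefficients c_n(i,j) = 1_{{i≠j}} (2n ln n)^{−1/2} |i−j|^{−1/2} satisfies κ²(c_n) ≤ C/ln²n.) -/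
/-!
Write `d = |i - j|`, `a = |i - k|`, `b = |j - k|`. Since `d ≤ a + b`, the larger of `a, b` is at
least `d / 2`, whence `(a b)^(-1/2) ≤ 2 d^(-1/4) (a^(-3/4) + b^(-3/4))`. Summing over `k` with
`∑_{t ≤ n} t^(-s) ≤ n^(1-s) / (1-s)` bounds the inner sum by `32 d^(-1/4) n^(1/4)`; its square
`1024 d^(-1/2) n^(1/2)` sums over `j` to at most `4096 n`, and then over `i` to `4096 n²`.
-/

open Real Finset

theorem mul_rpow_sub_one_le_rpow_add_one_sub_rpow {x c : ℝ} (hx : 0 ≤ x) (hc0 : 0 ≤ c)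
    (hc1 : c ≤ 1) :
    c * (x + 1) ^ (c - 1) ≤ (x + 1) ^ c - x ^ c := by
  have hy : 0 < x + 1 := by linarith
  have bernoulli := rpow_one_add_le_one_add_mul_self (s := -(x + 1)⁻¹)
    (by rw [neg_le_neg_iff]; exact inv_le_one_of_one_le₀ (by linarith)) hc0 hc1
  have hxy : 1 + -(x + 1)⁻¹ = x / (x + 1) := by field_simp; ring
  rw [hxy, div_rpow hx hy.le, div_le_iff₀ (by positivity)] at bernoulli
  calc c * (x + 1) ^ (c - 1) = (x + 1) ^ c - (1 + c * -(x + 1)⁻¹) * (x + 1) ^ c := by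
        rw [rpow_sub_one hy.ne']; ring
    _ ≤ (x + 1) ^ c - x ^ c := by linarith

theorem sum_Icc_rpow_neg_le {s : ℝ} (hs0 : 0 ≤ s) (hs1 : s < 1) (n : ℕ) :
    ∑ t ∈ Icc 1 n, (t : ℝ) ^ (-s) ≤ (n : ℝ) ^ (1 - s) / (1 - s) := by
  induction n with
  | zero => simp [zero_rpow (by linarith : 1 - s ≠ 0)]
  | succ n ih =>
    have step := mul_rpow_sub_one_le_rpow_add_one_sub_rpow (c := 1 - s) n.cast_nonneg
      (by linarith) (by linarith)
    rw [sum_Icc_succ_top (by omega), Nat.cast_succ, le_div_iff₀ (by linarith)]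
    rw [le_div_iff₀ (by linarith)] at ih
    rw [sub_sub_cancel_left] at step
    linarith

theorem sum_erase_natAbs_sub_le {g : ℕ → ℝ} (hg : ∀ t, 0 ≤ g t) {n i : ℕ} (hi : i ≤ n) :
    ∑ k ∈ (Icc 1 n).erase i, g ((i : ℤ) - k).natAbs ≤ 2 * ∑ t ∈ Icc 1 n, g t := by
  set dist : ℕ → ℕ := fun k => ((i : ℤ) - k).natAbs
  have fiber_card : ∀ t, #{k ∈ (Icc 1 n).erase i | dist k = t} ≤ 2 := fun t =>
    calc #{k ∈ (Icc 1 n).erase i | dist k = t} ≤ #{i - t, i + t} := by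
          refine card_le_card fun k hk => ?_
          simp only [mem_filter, dist] at hk
          simp only [mem_insert, mem_singleton]
          omega
      _ ≤ 2 := card_le_two
  have maps_to : ((Icc 1 n).erase i).image dist ⊆ Icc 1 n := by
    intro t ht
    simp only [mem_image, mem_erase, mem_Icc, dist] at ht ⊢
    omega
  calc ∑ k ∈ (Icc 1 n).erase i, g (dist k)
      = ∑ t ∈ ((Icc 1 n).erase i).image dist, #{k ∈ (Icc 1 n).erase i | dist k = t} • g t :=
        sum_comp g dist
    _ ≤ ∑ t ∈ ((Icc 1 n).erase i).image dist, 2 * g t := by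
        refine sum_le_sum fun t _ => ?_
        rw [nsmul_eq_mul]
        exact mul_le_mul_of_nonneg_right (by exact_mod_cast fiber_card t) (hg t)
    _ ≤ ∑ t ∈ Icc 1 n, 2 * g t :=
        sum_le_sum_of_subset_of_nonneg maps_to fun t _ _ => mul_nonneg zero_le_two (hg t)
    _ = 2 * ∑ t ∈ Icc 1 n, g t := (mul_sum ..).symm

theorem sum_erase_abs_sub_rpow_neg_le {s : ℝ} (hs0 : 0 ≤ s) (hs1 : s < 1) {n i : ℕ} (hi : i ≤ n) :
    ∑ k ∈ (Icc 1 n).erase i, |(i : ℝ) - k| ^ (-s) ≤ 2 * ((n : ℝ) ^ (1 - s) / (1 - s)) := by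
  have abs_eq (k : ℕ) : |(i : ℝ) - k| = (((i : ℤ) - k).natAbs : ℝ) := by
    rw [Nat.cast_natAbs, Int.cast_abs]; push_cast; rfl
  simp only [abs_eq]
  exact (sum_erase_natAbs_sub_le (fun t => by positivity) hi).trans
    (mul_le_mul_of_nonneg_left (sum_Icc_rpow_neg_le hs0 hs1 n) zero_le_two)

theorem one_div_sqrt_mul_le_of_le {a b d : ℝ} (ha : 0 < a) (hab : a ≤ b) (hd : 0 < d)
    (hdb : d ≤ 2 * b) : 1 / √(a * b) ≤ 2 * d ^ (-(1 / 4) : ℝ) * a ^ (-(3 / 4) : ℝ) := by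
  have hb : 0 < b := ha.trans_le hab
  have two_rpow : (2 : ℝ) ^ (1 / 4 : ℝ) ≤ 2 := by
    simpa using rpow_le_rpow_of_exponent_le one_le_two (by norm_num : (1 / 4 : ℝ) ≤ 1)
  have hb_d : b ^ (-(1 / 4) : ℝ) ≤ 2 * d ^ (-(1 / 4) : ℝ) :=
    calc b ^ (-(1 / 4) : ℝ) ≤ (d / 2) ^ (-(1 / 4) : ℝ) :=
          rpow_le_rpow_of_nonpos (by positivity) (by linarith) (by norm_num)
      _ = 2 ^ (1 / 4 : ℝ) * d ^ (-(1 / 4) : ℝ) := by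
          rw [div_rpow hd.le zero_le_two, rpow_neg zero_le_two, div_inv_eq_mul, mul_comm]
      _ ≤ 2 * d ^ (-(1 / 4) : ℝ) := by gcongr
  have hb_a : b ^ (-(1 / 4) : ℝ) ≤ a ^ (-(1 / 4) : ℝ) :=
    rpow_le_rpow_of_nonpos ha hab (by norm_num)
  calc 1 / √(a * b) = a ^ (-(1 / 2) : ℝ) * (b ^ (-(1 / 4) : ℝ) * b ^ (-(1 / 4) : ℝ)) := by
        rw [← rpow_add hb, sqrt_eq_rpow, mul_rpow ha.le hb.le, one_div, mul_inv, ← rpow_neg ha.le,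
          ← rpow_neg hb.le]
        norm_num
    _ ≤ a ^ (-(1 / 2) : ℝ) * (2 * d ^ (-(1 / 4) : ℝ) * a ^ (-(1 / 4) : ℝ)) := by gcongr
    _ = 2 * d ^ (-(1 / 4) : ℝ) * a ^ (-(3 / 4) : ℝ) := by
        rw [mul_left_comm, ← rpow_add ha]; norm_num

theorem one_div_sqrt_mul_le {a b d : ℝ} (ha : 0 < a) (hb : 0 < b) (hd : 0 < d)
    (hdab : d ≤ a + b) :
    1 / √(a * b) ≤ 2 * d ^ (-(1 / 4) : ℝ) * (a ^ (-(3 / 4) : ℝ) + b ^ (-(3 / 4) : ℝ)) := by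
  rw [mul_add]
  rcases le_total a b with hab | hba
  · exact le_add_of_le_of_nonneg (one_div_sqrt_mul_le_of_le ha hab hd (by linarith))
      (by positivity)
  · rw [mul_comm a b]
    exact le_add_of_nonneg_of_le (by positivity)
      (one_div_sqrt_mul_le_of_le hb hba hd (by linarith))

/-- `contraction n i j / (2 n log n)` is the entry `∑ₖ c_n(i,k) c_n(k,j)` of `c_n²`. -/
noncomputable def contraction (n i j : ℕ) : ℝ :=
  ∑ k ∈ Icc 1 n, if k ≠ i ∧ k ≠ j then 1 / √(|(i : ℝ) - k| * |(j : ℝ) - k|) else 0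

theorem contraction_nonneg (n i j : ℕ) : 0 ≤ contraction n i j :=
  sum_nonneg fun _ _ => by split_ifs <;> positivity

theorem abs_natCast_sub_natCast_pos {i k : ℕ} (h : i ≠ k) : 0 < |(i : ℝ) - k| :=
  abs_pos.2 (sub_ne_zero.2 (Nat.cast_injective.ne h))

theorem contraction_le {n i j : ℕ} (hi : i ≤ n) (hj : j ≤ n) (hij : i ≠ j) :
    contraction n i j ≤ 32 * |(i : ℝ) - j| ^ (-(1 / 4) : ℝ) * (n : ℝ) ^ (1 / 4 : ℝ) := by
  set w : ℝ := 2 * |(i : ℝ) - j| ^ (-(1 / 4) : ℝ)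
  have hw : 0 ≤ w := by positivity
  have one_sided {m : ℕ} (hm : m ≤ n) (hmij : m = i ∨ m = j) :
      ∑ k ∈ {k ∈ Icc 1 n | k ≠ i ∧ k ≠ j}, |(m : ℝ) - k| ^ (-(3 / 4) : ℝ) ≤ 8 * n ^ (1 / 4 : ℝ) :=
    calc _ ≤ ∑ k ∈ (Icc 1 n).erase m, |(m : ℝ) - k| ^ (-(3 / 4) : ℝ) :=
          sum_le_sum_of_subset_of_nonneg
            (fun k hk => by simp only [mem_filter, mem_erase, mem_Icc] at hk ⊢; omega)
            fun _ _ _ => by positivity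
      _ ≤ 8 * n ^ (1 / 4 : ℝ) := by
          have := sum_erase_abs_sub_rpow_neg_le (s := 3 / 4) (by norm_num) (by norm_num) hm
          norm_num at this ⊢
          linarith
  calc contraction n i j
      = ∑ k ∈ {k ∈ Icc 1 n | k ≠ i ∧ k ≠ j}, 1 / √(|(i : ℝ) - k| * |(j : ℝ) - k|) :=
        (sum_filter _ _).symm
    _ ≤ ∑ k ∈ {k ∈ Icc 1 n | k ≠ i ∧ k ≠ j},
          w * (|(i : ℝ) - k| ^ (-(3 / 4) : ℝ) + |(j : ℝ) - k| ^ (-(3 / 4) : ℝ)) := by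
        refine sum_le_sum fun k hk => ?_
        obtain ⟨hki, hkj⟩ := (mem_filter.1 hk).2
        refine one_div_sqrt_mul_le (abs_natCast_sub_natCast_pos hki.symm)
          (abs_natCast_sub_natCast_pos hkj.symm) (abs_natCast_sub_natCast_pos hij) ?_
        rw [abs_sub_comm (j : ℝ)]
        exact abs_sub_le _ _ _
    _ ≤ w * (8 * n ^ (1 / 4 : ℝ) + 8 * n ^ (1 / 4 : ℝ)) := by
        rw [← mul_sum, sum_add_distrib]
        exact mul_le_mul_of_nonneg_left
          (add_le_add (one_sided hi (.inl rfl)) (one_sided hj (.inr rfl))) hw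
    _ = 32 * |(i : ℝ) - j| ^ (-(1 / 4) : ℝ) * (n : ℝ) ^ (1 / 4 : ℝ) := by ring

theorem sum_sq_contraction_le {n i : ℕ} (hi : i ≤ n) :
    ∑ j ∈ Icc 1 n, (if i ≠ j then contraction n i j ^ 2 else 0) ≤ 4096 * n := by
  calc ∑ j ∈ Icc 1 n, (if i ≠ j then contraction n i j ^ 2 else 0)
      = ∑ j ∈ (Icc 1 n).erase i, contraction n i j ^ 2 := by
        rw [← sum_filter, filter_ne]
    _ ≤ ∑ j ∈ (Icc 1 n).erase i,
          1024 * (n : ℝ) ^ (1 / 2 : ℝ) * |(i : ℝ) - j| ^ (-(1 / 2) : ℝ) := by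
        refine sum_le_sum fun j hj => ?_
        obtain ⟨hji, hj⟩ := mem_erase.1 hj
        calc contraction n i j ^ 2
            ≤ (32 * |(i : ℝ) - j| ^ (-(1 / 4) : ℝ) * (n : ℝ) ^ (1 / 4 : ℝ)) ^ 2 :=
              pow_le_pow_left₀ (contraction_nonneg n i j)
                (contraction_le hi (mem_Icc.1 hj).2 (Ne.symm hji)) 2
          _ = 1024 * (n : ℝ) ^ (1 / 2 : ℝ) * |(i : ℝ) - j| ^ (-(1 / 2) : ℝ) := by
              rw [mul_pow, mul_pow, ← rpow_mul_natCast (abs_nonneg _),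
                ← rpow_mul_natCast n.cast_nonneg]
              norm_num; ring
    _ ≤ 1024 * (n : ℝ) ^ (1 / 2 : ℝ) * (4 * (n : ℝ) ^ (1 / 2 : ℝ)) := by
        rw [← mul_sum]
        refine mul_le_mul_of_nonneg_left ?_ (by positivity)
        have := sum_erase_abs_sub_rpow_neg_le (by norm_num) (by norm_num) hi (s := 1 / 2)
        norm_num at this ⊢
        linarith
    _ = 4096 * n := by
        rw [mul_mul_mul_comm, ← rpow_add' n.cast_nonneg (by norm_num)]; norm_num

theorem kurtosis_sum_estimate :
    ∃ C : ℝ, 0 < C ∧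
      ∀ n : ℕ, 2 ≤ n →
        ∑ i ∈ Finset.Icc 1 n, ∑ j ∈ Finset.Icc 1 n,
          (if i ≠ j then
            (∑ k ∈ Finset.Icc 1 n,
              if k ≠ i ∧ k ≠ j then
                1 / Real.sqrt (|(i : ℝ) - k| * |(j : ℝ) - k|)
              else 0) ^ 2
          else 0) ≤ C * (n : ℝ) ^ 2 := by
  refine ⟨4096, by norm_num, fun n _ => ?_⟩
  calc _ ≤ ∑ _i ∈ Icc 1 n, 4096 * (n : ℝ) :=
        sum_le_sum fun i hi => sum_sq_contraction_le (mem_Icc.1 hi).2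
    _ = 4096 * (n : ℝ) ^ 2 := by
        simp only [sum_const, Nat.card_Icc, add_tsub_cancel_right, nsmul_eq_mul]; ring
end

section
/- Fix p ∈ (0, 1/2). Define ψ_p : [0,1]² → ℝ by ψ_p(s,t) = |s−t|^{−p} (for s ≠ t), and for n ≥ 1 let t_i = i/n and define the step function ψ_{n,p}(s,t) = Σ_{0≤i,j≤n−1, i≠j} |t_i − t_j|^{−p} · 1_{[t_i,t_{i+1})}(s) · 1_{[t_j,t_{j+1})}(t) (so ψ_{n,p} vanishes on the diagonal cells). Then there exists a constant C > 0, depending only on p, such that for every n ≥ 1: ∫_0^1 ∫_0^1 |ψ_p(s,t) − ψ_{n,p}(s,t)|² ds dt ≤ C · n^{−2(1−2p)/3}. -/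
open MeasureTheory Real

noncomputable section

/-- The kernel `ψ_p(s,t) = |s−t|^{−p}`. -/
def psiP (p s t : ℝ) : ℝ := |s - t| ^ (-p)

/-- The grid discretization `ψ_{n,p}` of `ψ_p` (vanishing on the diagonal cells). -/
def psiNP (p : ℝ) (n : ℕ) (s t : ℝ) : ℝ :=
  ∑ i ∈ Finset.range n, ∑ j ∈ Finset.range n,
    (if i = j then 0 else |(i : ℝ) / n - (j : ℝ) / n| ^ (-p)) *
      Set.indicator (Set.Ico ((i : ℝ) / n) (((i : ℝ) + 1) / n)) (fun _ => (1 : ℝ)) s *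
      Set.indicator (Set.Ico ((j : ℝ) / n) (((j : ℝ) + 1) / n)) (fun _ => (1 : ℝ)) t

open Set

/-! On the grid cell containing `(s, t)` the kernel `ψ_{n,p}` equals `q ^ (-p)`, where `q` is
the distance of the cell corners (or `0` on diagonal cells), and `|d - q| ≤ 1 / n` for
`d = |s - t|`. If `d ≤ 4 / n`, both kernels are `O(d ^ (-p))`; if `d > 4 / n`, the mean value
theorem bounds the error by `O(d ^ (-p - 1) / n)`. In both cases the squared error is
`O(n ^ (-a) * d ^ (-(2 * p + a)))` for every `0 ≤ a ≤ 2`, and `a = 2 * (1 - 2 * p) / 3` keeps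
`2 * p + a < 1`, so that `|s - t| ^ (-(2 * p + a))` is integrable over the unit square. -/

lemma abs_rpow_neg_sub_rpow_neg_le {p m x y : ℝ} (hp : 0 ≤ p) (hm : 0 < m) (hx : m ≤ x)
    (hy : m ≤ y) : |x ^ (-p) - y ^ (-p)| ≤ p * m ^ (-p - 1) * |x - y| := by
  have hderiv : ∀ z ∈ Ici m,
      HasDerivWithinAt (fun z : ℝ => z ^ (-p)) (-p * z ^ (-p - 1)) (Ici m) z :=
    fun z hz => (hasDerivAt_rpow_const (Or.inl (hm.trans_le hz).ne')).hasDerivWithinAt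
  have hbound : ∀ z ∈ Ici m, ‖-p * z ^ (-p - 1)‖ ≤ p * m ^ (-p - 1) := fun z hz => by
    rw [norm_mul, norm_neg, Real.norm_of_nonneg hp,
      Real.norm_of_nonneg (rpow_nonneg (hm.le.trans hz) _)]
    exact mul_le_mul_of_nonneg_left (rpow_le_rpow_of_nonpos hm hz (by linarith)) hp
  exact (convex_Ici m).norm_image_sub_le_of_norm_hasDerivWithin_le hderiv hbound hy hx

lemma sq_rpow_neg_sub_le_of_le_four_mul {p a h d v : ℝ} (hp : 0 ≤ p) (ha : 0 ≤ a) (hd : 0 < d)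
    (hdh : d ≤ 4 * h) (hv0 : 0 ≤ v) (hv : v ≤ h ^ (-p)) :
    (d ^ (-p) - v) ^ 2 ≤ 4 ^ (2 * p + a) * h ^ a * d ^ (-(2 * p + a)) := by
  have hh : 0 < h := by linarith
  have hv' : v ≤ 4 ^ p * d ^ (-p) := by
    calc v ≤ h ^ (-p) := hv
      _ = 4 ^ p * (4 * h) ^ (-p) := by
        rw [mul_rpow (by norm_num) hh.le, rpow_neg (by norm_num : (0:ℝ) ≤ 4), ← mul_assoc,
          mul_inv_cancel₀ (by positivity), one_mul]
      _ ≤ 4 ^ p * d ^ (-p) :=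
        mul_le_mul_of_nonneg_left (rpow_le_rpow_of_nonpos hd hdh (by linarith))
          (by positivity)
  have hd' : d ^ (-p) ≤ 4 ^ p * d ^ (-p) :=
    le_mul_of_one_le_left (by positivity) (one_le_rpow (by norm_num) hp)
  calc (d ^ (-p) - v) ^ 2 ≤ (4 ^ p * d ^ (-p)) ^ 2 := by
        rw [sq_le_sq, abs_of_nonneg (by positivity : (0:ℝ) ≤ 4 ^ p * d ^ (-p)), abs_le]
        constructor <;> nlinarith [rpow_nonneg hd.le (-p)]
    _ = 4 ^ (2 * p) * d ^ a * d ^ (-(2 * p + a)) := by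
        rw [mul_pow, ← rpow_natCast, ← rpow_natCast, ← rpow_mul (by norm_num),
          ← rpow_mul hd.le, mul_assoc, ← rpow_add hd]
        ring_nf
    _ ≤ 4 ^ (2 * p) * (4 * h) ^ a * d ^ (-(2 * p + a)) := by gcongr
    _ = 4 ^ (2 * p + a) * h ^ a * d ^ (-(2 * p + a)) := by
        rw [mul_rpow (by norm_num) hh.le, rpow_add (by norm_num)]; ring

lemma sq_rpow_neg_sub_rpow_neg_le_of_four_mul_lt {p a h d q : ℝ} (hp : 0 ≤ p) (ha : a ≤ 2)
    (hh : 0 < h) (hdh : 4 * h < d) (hdq : |d - q| ≤ h) :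
    (d ^ (-p) - q ^ (-p)) ^ 2 ≤ p ^ 2 * 4 ^ (p + 1) * h ^ a * d ^ (-(2 * p + a)) := by
  have hd : 0 < d := by linarith
  have hq : d / 2 ≤ q := by linarith [(abs_le.mp hdq).2]
  have hmvt : |d ^ (-p) - q ^ (-p)| ≤ p * (d / 2) ^ (-p - 1) * h :=
    (abs_rpow_neg_sub_rpow_neg_le hp (by positivity) (by linarith) hq).trans
      (mul_le_mul_of_nonneg_left hdq (by positivity))
  have hratio : (h / d) ^ (2 - a) ≤ 1 :=
    rpow_le_one (by positivity) ((div_le_one hd).mpr (by linarith)) (by linarith)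
  calc (d ^ (-p) - q ^ (-p)) ^ 2 ≤ (p * (d / 2) ^ (-p - 1) * h) ^ 2 := by
        rw [← sq_abs]; exact pow_le_pow_left₀ (abs_nonneg _) hmvt 2
    _ = p ^ 2 * 4 ^ (p + 1) * h ^ a * d ^ (-(2 * p + a)) * (h / d) ^ (2 - a) := by
        have e1 :
            ((d / 2) ^ (-p - 1)) ^ 2 = 4 ^ (p + 1) * d ^ (-(2 * p + a)) * d ^ (a - 2) := by
          rw [← rpow_natCast, ← rpow_mul (by positivity), div_rpow hd.le (by norm_num),
            mul_assoc,
            ← rpow_add hd, show (4:ℝ) = 2 ^ (2:ℝ) by norm_num, ← rpow_mul (by norm_num),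
            div_eq_mul_inv, ← rpow_neg (by norm_num)]
          push_cast; ring_nf
        have e2 : h ^ 2 = h ^ a * h ^ (2 - a) := by rw [← rpow_add hh, add_sub_cancel, rpow_two]
        have e3 : (h / d) ^ (2 - a) = h ^ (2 - a) * d ^ (a - 2) := by
          rw [div_rpow hh.le hd.le, div_eq_mul_inv, ← rpow_neg hd.le, neg_sub]
        rw [e3, mul_pow, mul_pow, e1, e2]; ring
    _ ≤ p ^ 2 * 4 ^ (p + 1) * h ^ a * d ^ (-(2 * p + a)) :=
        mul_le_of_le_one_right (by positivity) hratio

lemma mem_Ico_div_iff_floor_eq {n k : ℕ} (hn : 0 < n) {s : ℝ} (hs : 0 ≤ s) :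
    s ∈ Ico ((k : ℝ) / n) (((k : ℝ) + 1) / n) ↔ ⌊(n : ℝ) * s⌋₊ = k := by
  have hn' : (0 : ℝ) < n := Nat.cast_pos.mpr hn
  rw [mem_Ico, div_le_iff₀ hn', lt_div_iff₀ hn', mul_comm s, Nat.floor_eq_iff (by positivity)]

lemma floor_mul_lt_of_mem_Ico {n : ℕ} (hn : 0 < n) {s : ℝ} (hs : s ∈ Ico (0 : ℝ) 1) :
    ⌊(n : ℝ) * s⌋₊ < n := by
  rw [Nat.floor_lt (mul_nonneg n.cast_nonneg hs.1)]
  exact mul_lt_of_lt_one_right (Nat.cast_pos.mpr hn) hs.2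

lemma psiNP_eq_of_mem_Ico (p : ℝ) {n : ℕ} (hn : 0 < n) {s t : ℝ}
    (hs : s ∈ Ico (0 : ℝ) 1) (ht : t ∈ Ico (0 : ℝ) 1) :
    psiNP p n s t = if ⌊(n : ℝ) * s⌋₊ = ⌊(n : ℝ) * t⌋₊ then 0
      else |(⌊(n : ℝ) * s⌋₊ : ℝ) / n - (⌊(n : ℝ) * t⌋₊ : ℝ) / n| ^ (-p) := by
  simp only [psiNP, indicator_apply, mem_Ico_div_iff_floor_eq hn hs.1,
    mem_Ico_div_iff_floor_eq hn ht.1, mul_ite, mul_one, mul_zero,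
    Finset.sum_ite_eq, Finset.mem_range, floor_mul_lt_of_mem_Ico hn hs,
    floor_mul_lt_of_mem_Ico hn ht, if_true]

lemma sq_psiP_sub_psiNP_le {p a : ℝ} {n : ℕ} {s t : ℝ} (hp : 0 ≤ p) (ha0 : 0 ≤ a) (ha2 : a ≤ 2)
    (hn : 0 < n) (hs : s ∈ Ico (0 : ℝ) 1) (ht : t ∈ Ico (0 : ℝ) 1) (hst : s ≠ t) :
    (psiP p s t - psiNP p n s t) ^ 2 ≤
      (4 ^ (2 * p + a) + p ^ 2 * 4 ^ (p + 1)) * (n : ℝ) ^ (-a) * |s - t| ^ (-(2 * p + a)) := by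
  have hn' : (0 : ℝ) < n := Nat.cast_pos.mpr hn
  set h : ℝ := (n : ℝ)⁻¹ with h_def
  have hh : 0 < h := inv_pos.mpr hn'
  set i := ⌊(n : ℝ) * s⌋₊
  set j := ⌊(n : ℝ) * t⌋₊
  set d := |s - t|
  set q := |(i : ℝ) / n - (j : ℝ) / n|
  have hd : 0 < d := abs_pos.mpr (sub_ne_zero.mpr hst)
  have hdq : |d - q| ≤ h := by
    have hsi := (mem_Ico_div_iff_floor_eq hn hs.1 (k := i)).mpr rfl
    have htj := (mem_Ico_div_iff_floor_eq hn ht.1 (k := j)).mpr rfl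
    have hcell : ∀ k : ℕ, ((k : ℝ) + 1) / n = k / n + h := fun k => by ring
    rw [mem_Ico, hcell] at hsi htj
    refine (abs_abs_sub_abs_le_abs_sub _ _).trans (abs_sub_le_iff.mpr ⟨?_, ?_⟩) <;> linarith
  have hq : i ≠ j → h ≤ q := fun hij => by
    have hij' : (1 : ℤ) ≤ |(i : ℤ) - j| := Int.one_le_abs (sub_ne_zero.mpr (mod_cast hij))
    replace hij' : (1 : ℝ) ≤ |(i : ℝ) - j| := mod_cast hij'
    show h ≤ |(i : ℝ) / n - (j : ℝ) / n|
    rw [div_sub_div_same, abs_div, abs_of_pos hn', h_def, ← one_div]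
    exact div_le_div_of_nonneg_right hij' hn'.le
  rw [psiP, psiNP_eq_of_mem_Ico p hn hs ht, show (n : ℝ) ^ (-a) = h ^ a by
    rw [h_def, inv_rpow hn'.le, rpow_neg hn'.le], add_mul, add_mul]
  by_cases hnear : d ≤ 4 * h
  · refine (sq_rpow_neg_sub_le_of_le_four_mul hp ha0 hd hnear ?_ ?_).trans
      (le_add_of_nonneg_right (by positivity))
    · split_ifs <;> positivity
    · split_ifs with hij
      · positivity
      · exact rpow_le_rpow_of_nonpos hh (hq hij) (by linarith)
  · have hij : i ≠ j := fun hij => by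
      have : q = 0 := by simp [q, hij]
      rw [this, sub_zero, abs_of_pos hd] at hdq
      linarith
    rw [if_neg hij]
    exact (sq_rpow_neg_sub_rpow_neg_le_of_four_mul_lt hp ha2 hh (not_le.mp hnear) hdq).trans
      (le_add_of_nonneg_left (by positivity))

lemma intervalIntegrable_abs_rpow {r : ℝ} (hr : -1 < r) (a b : ℝ) :
    IntervalIntegrable (fun u : ℝ => |u| ^ r) volume a b := by
  have hpos : ∀ b : ℝ, 0 ≤ b → IntervalIntegrable (fun u : ℝ => |u| ^ r) volume 0 b :=
    fun b hb => (intervalIntegral.intervalIntegrable_rpow' hr).congr fun u hu => by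
      rw [uIoc_of_le hb] at hu
      simp only [abs_of_pos hu.1]
  have hzero : ∀ b : ℝ, IntervalIntegrable (fun u : ℝ => |u| ^ r) volume 0 b := fun b => by
    rcases le_total 0 b with hb | hb
    · exact hpos b hb
    · simpa using (IntervalIntegrable.iff_comp_neg (by simp)).mp (hpos (-b) (by linarith))
  exact (hzero a).symm.trans (hzero b)

lemma integral_abs_rpow_neg_one_one {r : ℝ} (hr : -1 < r) :
    ∫ u in (-1 : ℝ)..1, |u| ^ r = 2 / (r + 1) := by
  have hright : ∫ u in (0 : ℝ)..1, |u| ^ r = 1 / (r + 1) := by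
    rw [intervalIntegral.integral_congr (g := fun u => u ^ r) fun u hu => by
      rw [uIcc_of_le zero_le_one] at hu
      simp only [abs_of_nonneg hu.1], integral_rpow (Or.inl hr), one_rpow,
      zero_rpow (by linarith)]
    ring
  have hleft : ∫ u in (-1 : ℝ)..0, |u| ^ r = ∫ u in (0 : ℝ)..1, |u| ^ r := by
    simpa using (intervalIntegral.integral_comp_neg (a := 0) (b := 1) fun u => |u| ^ r).symm
  rw [← intervalIntegral.integral_add_adjacent_intervals (intervalIntegrable_abs_rpow hr _ _)
    (intervalIntegrable_abs_rpow hr _ _), hleft, hright]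
  ring

lemma integrableOn_abs_sub_rpow {r : ℝ} (hr : -1 < r) (s : ℝ) :
    IntegrableOn (fun t => |s - t| ^ r) (Ioc 0 1) := by
  have := (intervalIntegrable_abs_rpow hr s (s - 1)).comp_sub_left s
  simp only [sub_self, sub_sub_cancel] at this
  exact (intervalIntegrable_iff_integrableOn_Ioc_of_le zero_le_one).mp this

lemma setIntegral_Ioc_abs_sub_rpow_le {r : ℝ} (hr : -1 < r) {s : ℝ} (hs : s ∈ Icc (0 : ℝ) 1) :
    ∫ t in Ioc 0 1, |s - t| ^ r ≤ 2 / (r + 1) := by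
  rw [← intervalIntegral.integral_of_le zero_le_one,
    intervalIntegral.integral_comp_sub_left (fun u => |u| ^ r), sub_zero,
    ← integral_abs_rpow_neg_one_one hr]
  exact intervalIntegral.integral_mono_interval (by linarith [hs.1]) (by linarith) hs.2
    (Filter.Eventually.of_forall fun u => by positivity) (intervalIntegrable_abs_rpow hr _ _)

lemma setIntegral_sq_psiP_sub_psiNP_le {p a : ℝ} {n : ℕ} {s : ℝ} (hp : 0 ≤ p) (ha0 : 0 ≤ a)
    (ha2 : a ≤ 2) (hpa : 2 * p + a < 1) (hn : 0 < n) (hs : s ∈ Ico (0 : ℝ) 1) :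
    ∫ t in Ioc 0 1, (psiP p s t - psiNP p n s t) ^ 2 ≤
      (4 ^ (2 * p + a) + p ^ 2 * 4 ^ (p + 1)) * (2 / (1 - (2 * p + a))) * (n : ℝ) ^ (-a) := by
  set K : ℝ := 4 ^ (2 * p + a) + p ^ 2 * 4 ^ (p + 1)
  have hr : -1 < -(2 * p + a) := by linarith
  have hpointwise : ∀ᵐ t ∂volume.restrict (Ioc (0 : ℝ) 1),
      (psiP p s t - psiNP p n s t) ^ 2 ≤ K * (n : ℝ) ^ (-a) * |s - t| ^ (-(2 * p + a)) := by
    filter_upwards [ae_restrict_mem measurableSet_Ioc, Measure.ae_ne _ 1, Measure.ae_ne _ s]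
      with t ht ht1 hts
    exact sq_psiP_sub_psiNP_le hp ha0 ha2 hn hs ⟨ht.1.le, lt_of_le_of_ne ht.2 ht1⟩ hts.symm
  calc ∫ t in Ioc 0 1, (psiP p s t - psiNP p n s t) ^ 2
      ≤ ∫ t in Ioc 0 1, K * (n : ℝ) ^ (-a) * |s - t| ^ (-(2 * p + a)) :=
        integral_mono_of_nonneg (Filter.Eventually.of_forall fun _ => sq_nonneg _)
          ((integrableOn_abs_sub_rpow hr s).const_mul _) hpointwise
    _ = K * (n : ℝ) ^ (-a) * ∫ t in Ioc 0 1, |s - t| ^ (-(2 * p + a)) :=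
        integral_const_mul _ _
    _ ≤ K * (n : ℝ) ^ (-a) * (2 / (-(2 * p + a) + 1)) :=
        mul_le_mul_of_nonneg_left (setIntegral_Ioc_abs_sub_rpow_le hr ⟨hs.1, hs.2.le⟩)
          (by positivity)
    _ = K * (2 / (1 - (2 * p + a))) * (n : ℝ) ^ (-a) := by ring_nf

theorem grid_approximation_L2
    (p : ℝ) (hp0 : 0 < p) (hp : p < 1 / 2) :
    ∃ C : ℝ, 0 < C ∧
      ∀ n : ℕ, 1 ≤ n →
        (∫ s in Set.Ioc (0 : ℝ) 1, ∫ t in Set.Ioc (0 : ℝ) 1,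
            (psiP p s t - psiNP p n s t) ^ 2) ≤
          C * (n : ℝ) ^ (-(2 * (1 - 2 * p) / 3)) := by
  set a : ℝ := 2 * (1 - 2 * p) / 3 with ha
  have hpa : 2 * p + a < 1 := by linarith
  set C : ℝ := (4 ^ (2 * p + a) + p ^ 2 * 4 ^ (p + 1)) * (2 / (1 - (2 * p + a)))
  refine ⟨C, mul_pos (by positivity) (div_pos two_pos (by linarith)), fun n hn => ?_⟩
  have hinner : ∀ᵐ s ∂volume.restrict (Ioc (0 : ℝ) 1),
      ‖∫ t in Ioc 0 1, (psiP p s t - psiNP p n s t) ^ 2‖ ≤ C * (n : ℝ) ^ (-a) := by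
    filter_upwards [ae_restrict_mem measurableSet_Ioc, Measure.ae_ne _ 1] with s hs hs1
    rw [Real.norm_of_nonneg (integral_nonneg fun _ => sq_nonneg _)]
    exact setIntegral_sq_psiP_sub_psiNP_le hp0.le (by linarith) (by linarith) hpa hn
      ⟨hs.1.le, lt_of_le_of_ne hs.2 hs1⟩
  calc _ ≤ ‖∫ s in Ioc (0 : ℝ) 1, ∫ t in Ioc 0 1, (psiP p s t - psiNP p n s t) ^ 2‖ :=
        Real.le_norm_self _
    _ ≤ _ :=
        (norm_setIntegral_le_of_norm_le_const_ae measure_Ioc_lt_top hinner).trans_eq (by simp)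

end
end
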